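/- arXiv:2108.02585 — 6 statements merged into one kernel-verified Lean document; each statement's English description precedes it below -/
import Mathlib

section
/- Let C = (V, E) be an abstract simplicial complex, a, b ∉ V, and C⁺ = C * {a, b} the join complex. If C⁺ has a geometric embedding in ℝ^{d+1}, then C has a geometric embedding in ℝ^d. Consequently, C geometrically embeds in ℝ^d if and only if C⁺ geometrically embeds in ℝ^{d+1}. -/
/-- An abstract simplicial complex: a family of nonempty finite sets
closed under taking nonempty subsets. -/
def IsComplex {α : Type*} [DecidableEq α] (E : Finset (Finset α)) : Prop :=
  (∀ e ∈ E, e.Nonempty) ∧ ∀ e ∈ E, ∀ e' ⊆ e, e'.Nonempty → e' ∈ E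

/-- A geometric embedding of an abstract simplicial complex in ℝ^d:
each hyperedge is mapped to an affinely independent point set (so spans a
simplex of dimension `|e| - 1`), and convex hulls of images of two hyperedges
intersect exactly in the convex hull of the image of their intersection. -/
def IsGeomEmbedding {α : Type*} [DecidableEq α] {d : ℕ} (E : Finset (Finset α))
    (φ : α → (Fin d → ℝ)) : Prop :=
  (∀ e ∈ E, AffineIndependent ℝ (fun v : ↥e => φ v)) ∧
  ∀ e ∈ E, ∀ e' ∈ E,
    convexHull ℝ (φ '' (e : Set α)) ∩ convexHull ℝ (φ '' (e' : Set α)) =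
      convexHull ℝ (φ '' ((e ∩ e' : Finset α) : Set α))

/-- The join complex `C * {a, b}`. -/
def joinTwo {α : Type*} [DecidableEq α] (E : Finset (Finset α)) (a b : α) :
    Finset (Finset α) :=
  E ∪ E.image (insert a) ∪ E.image (insert b) ∪ {{a}, {b}}

/-
Forward direction: lift ℝ^d to the hyperplane x₀ = 0 of ℝ^(d+1) and put a, b at ±e₀. A simplex
of C and a cone over one of a, b meet only inside the hyperplane, two cones over the same apex
meet in the cone over the common face, and cones over a and over b meet only in the hyperplane,
because x₀ is nonnegative on the first and nonpositive on the second.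

Reverse direction: project ℝ^(d+1) onto ℝ^d along u = ψ(a) - ψ(b). If x ∈ conv ψ(e) and
x + c u ∈ conv ψ(e') for simplices e, e' of C and some c > 0, then with μ = c / (1 + c) the point
μ ψ(a) + (1 - μ) x = μ ψ(b) + (1 - μ)(x + c u) lies in both cones a * e and b * e', hence in
conv ψ(e ∩ e'), and ψ(a) would lie in the affine span of ψ(e). So the projection is injective on
the union of the simplices of C, and u is parallel to none of them, so they stay nondegenerate.
-/

open Set

section ConvexHull

variable {W : Type*} [AddCommGroup W] [Module ℝ W] {P Q p x : W} {S T R : Set W}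

theorem mem_convexHull_insert_cases (hp : p ∈ convexHull ℝ (insert P S)) :
    p = P ∨ ∃ μ ∈ Ico (0 : ℝ) 1, ∃ x ∈ convexHull ℝ S, p = μ • P + (1 - μ) • x := by
  rcases S.eq_empty_or_nonempty with rfl | hS
  · simpa using hp
  rw [convexHull_insert hS, mem_convexJoin] at hp
  obtain ⟨x, hx, θ, ⟨h0, h1⟩, rfl⟩ := by simpa [segment_eq_image] using hp
  rcases h0.eq_or_lt with rfl | h0
  · simp
  · exact .inr ⟨1 - θ, ⟨by linarith, by linarith⟩, x, hx, by module⟩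

theorem smul_add_mem_convexHull_insert (hx : x ∈ convexHull ℝ S) {μ : ℝ} (h0 : 0 ≤ μ)
    (h1 : μ ≤ 1) : μ • P + (1 - μ) • x ∈ convexHull ℝ (insert P S) :=
  convex_convexHull ℝ _ (subset_convexHull ℝ _ (mem_insert _ _))
    (convexHull_mono (subset_insert _ _) hx) h0 (by linarith) (by ring)

variable {f : W →ₗ[ℝ] ℝ}

theorem convexHull_insert_inter_ker (hS : S ⊆ LinearMap.ker f) (hP : f P ≠ 0) :
    convexHull ℝ (insert P S) ∩ LinearMap.ker f = convexHull ℝ S := by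
  refine Subset.antisymm ?_ (subset_inter (convexHull_mono (subset_insert _ _))
    (convexHull_min hS (LinearMap.ker f).convex))
  rintro p ⟨hp, hfp⟩
  rcases mem_convexHull_insert_cases hp with rfl | ⟨μ, -, x, hx, rfl⟩
  · exact absurd hfp hP
  · have hfx : f x = 0 := convexHull_min hS (LinearMap.ker f).convex hx
    have hμ : μ = 0 := by simpa [hfx, hP] using hfp
    simpa [hμ] using hx

theorem convexHull_insert_inter_of_subset_ker (hS : S ⊆ LinearMap.ker f)
    (hT : T ⊆ LinearMap.ker f) (hP : f P ≠ 0)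
    (h : convexHull ℝ S ∩ convexHull ℝ T = convexHull ℝ R) :
    convexHull ℝ (insert P S) ∩ convexHull ℝ T = convexHull ℝ R := by
  rw [← h, ← convexHull_insert_inter_ker hS hP, inter_assoc,
    inter_eq_right.mpr (convexHull_min hT (LinearMap.ker f).convex)]

theorem convexHull_insert_inter_insert_of_neg (hS : S ⊆ LinearMap.ker f)
    (hT : T ⊆ LinearMap.ker f) (hP : 0 < f P) (hQ : f Q < 0)
    (h : convexHull ℝ S ∩ convexHull ℝ T = convexHull ℝ R) :
    convexHull ℝ (insert P S) ∩ convexHull ℝ (insert Q T) = convexHull ℝ R := by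
  have hK : convexHull ℝ (insert P S) ∩ convexHull ℝ (insert Q T) ⊆ LinearMap.ker f := by
    rintro p ⟨hpP, hpQ⟩
    have h1 : 0 ≤ f p := convexHull_min (t := {w | 0 ≤ f w})
      (insert_subset hP.le fun x hx => (LinearMap.mem_ker.mp (hS hx)).ge)
      (convex_halfSpace_ge f.isLinear 0) hpP
    have h2 : f p ≤ 0 := convexHull_min (t := {w | f w ≤ 0})
      (insert_subset hQ.le fun x hx => (LinearMap.mem_ker.mp (hT hx)).le)
      (convex_halfSpace_le f.isLinear 0) hpQ
    exact LinearMap.mem_ker.mpr (le_antisymm h2 h1)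
  refine Subset.antisymm (fun p hp => ?_) ?_
  · rw [← h, ← convexHull_insert_inter_ker hS hP.ne', ← convexHull_insert_inter_ker hT hQ.ne]
    exact ⟨⟨hp.1, hK hp⟩, hp.2, hK hp⟩
  · rw [← h]
    exact inter_subset_inter (convexHull_mono (subset_insert _ _))
      (convexHull_mono (subset_insert _ _))

theorem convexHull_insert_inter_insert_self (hS : S ⊆ LinearMap.ker f)
    (hT : T ⊆ LinearMap.ker f) (hP : f P ≠ 0)
    (h : convexHull ℝ S ∩ convexHull ℝ T = convexHull ℝ R) :
    convexHull ℝ (insert P S) ∩ convexHull ℝ (insert P T) = convexHull ℝ (insert P R) := by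
  refine Subset.antisymm ?_ (convexHull_min ?_ ((convex_convexHull ℝ _).inter
    (convex_convexHull ℝ _)))
  · rintro p ⟨hpS, hpT⟩
    rcases mem_convexHull_insert_cases hpS with rfl | ⟨μ, ⟨hμ0, hμ1⟩, x, hx, rfl⟩
    · exact subset_convexHull ℝ _ (mem_insert _ _)
    have hfx : f x = 0 := convexHull_min hS (LinearMap.ker f).convex hx
    rcases mem_convexHull_insert_cases hpT with hPx | ⟨ν, -, y, hy, hxy⟩
    · have : μ * f P = f P := by simpa [hfx] using congrArg f hPx
      exact absurd (mul_right_cancel₀ hP (this.trans (one_mul _).symm)) hμ1.ne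
    have hfy : f y = 0 := convexHull_min hT (LinearMap.ker f).convex hy
    obtain rfl : μ = ν := mul_right_cancel₀ hP (by simpa [hfx, hfy] using congrArg f hxy)
    obtain rfl : x = y := smul_right_injective W (sub_ne_zero.mpr hμ1.ne') (add_left_cancel hxy)
    exact smul_add_mem_convexHull_insert (h ▸ ⟨hx, hy⟩) hμ0 hμ1.le
  · refine insert_subset ⟨subset_convexHull ℝ _ (mem_insert _ _),
      subset_convexHull ℝ _ (mem_insert _ _)⟩ ?_
    exact (subset_convexHull ℝ R).trans (h ▸ inter_subset_inter
      (convexHull_mono (subset_insert _ _)) (convexHull_mono (subset_insert _ _)))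

theorem add_smul_sub_notMem_convexHull
    (hPQ : convexHull ℝ (insert P S) ∩ convexHull ℝ (insert Q T) ⊆ affineSpan ℝ S)
    (hP : P ∉ affineSpan ℝ S) (hx : x ∈ convexHull ℝ S) {c : ℝ} (hc : 0 < c) :
    x + c • (P - Q) ∉ convexHull ℝ T := by
  intro hy
  have hμ : 1 - c * (1 + c)⁻¹ = (1 + c)⁻¹ := by field_simp; ring
  set μ := c * (1 + c)⁻¹
  have hμ0 : 0 < μ := by positivity
  have hμ1 : μ ≤ 1 := by linarith [inv_pos.mpr (by linarith : (0 : ℝ) < 1 + c)]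
  have hz : μ • Q + (1 - μ) • (x + c • (P - Q)) = μ • P + (1 - μ) • x := by
    rw [hμ]; module
  have hzS : μ • P + (1 - μ) • x ∈ affineSpan ℝ S :=
    hPQ ⟨smul_add_mem_convexHull_insert hx hμ0.le hμ1,
      hz ▸ smul_add_mem_convexHull_insert hy hμ0.le hμ1⟩
  have hxS : x ∈ affineSpan ℝ S := convexHull_subset_affineSpan S hx
  refine hP ?_
  convert (affineSpan ℝ S).smul_vsub_vadd_mem μ⁻¹ hzS hxS hxS using 1
  rw [vsub_eq_sub, vadd_eq_add, show μ • P + (1 - μ) • x - x = μ • (P - x) by module, smul_smul,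
    inv_mul_cancel₀ hμ0.ne', one_smul, sub_add_cancel]

theorem exists_add_smul_mem_convexHull_of_mem_vectorSpan {v : W}
    (hv : v ∈ vectorSpan ℝ S) (hv0 : v ≠ 0) :
    ∃ x ∈ convexHull ℝ S, ∃ c : ℝ, 0 < c ∧ x + c • v ∈ convexHull ℝ S := by
  rw [← Subtype.range_coe (s := S)] at hv
  obtain ⟨s, w, hw, rfl⟩ := (mem_vectorSpan_iff_eq_weightedVSub ℝ).mp hv
  rw [s.weightedVSub_eq_linear_combination hw] at hv0 ⊢
  set r := ∑ i ∈ s, (w i)⁻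
  have hsum : ∑ i ∈ s, (w i)⁺ = r := by
    rw [← sub_eq_zero, ← Finset.sum_sub_distrib, ← hw]
    simp only [posPart_sub_negPart]
  have hr : 0 < r := by
    refine (Finset.sum_nonneg fun i _ => negPart_nonneg (w i)).lt_of_ne fun hr0 => hv0 ?_
    have hneg := (Finset.sum_eq_zero_iff_of_nonneg fun i _ => negPart_nonneg (w i)).mp hr0.symm
    have hpos := (Finset.sum_eq_zero_iff_of_nonneg fun i _ => posPart_nonneg (w i)).mp
      (hsum.trans hr0.symm)
    refine Finset.sum_eq_zero fun i hi => ?_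
    rw [← posPart_sub_negPart (w i), hpos i hi, hneg i hi, sub_zero, zero_smul]
  refine ⟨s.centerMass (fun i => (w i)⁻) (↑), ?_, r⁻¹, inv_pos.mpr hr, ?_⟩
  · exact s.centerMass_mem_convexHull (fun i _ => negPart_nonneg (w i)) hr fun i _ => i.2
  · convert s.centerMass_mem_convexHull (fun i _ => posPart_nonneg (w i)) (hsum ▸ hr)
      (z := (↑)) fun i _ => i.2 using 1
    rw [Finset.centerMass, Finset.centerMass, hsum, ← smul_add, ← Finset.sum_add_distrib]
    refine congrArg _ (Finset.sum_congr rfl fun i _ => ?_)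
    rw [← add_smul]
    congr 1
    linarith [posPart_sub_negPart (w i)]

end ConvexHull

theorem AffineIndependent.linearMap_comp {k ι V V' : Type*} [Ring k] [AddCommGroup V] [Module k V]
    [AddCommGroup V'] [Module k V'] {p : ι → V} (hp : AffineIndependent k p) (F : V →ₗ[k] V')
    (hF : Disjoint (LinearMap.ker F) (vectorSpan k (range p))) : AffineIndependent k (F ∘ p) := by
  rw [affineIndependent_iff] at hp ⊢
  intro s w hw0 hw1
  refine hp s w hw0 ?_
  have hmem : ∑ i ∈ s, w i • p i ∈ vectorSpan k (range p) := by
    rw [← s.weightedVSub_eq_linear_combination hw0]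
    exact weightedVSub_mem_vectorSpan hw0 p
  have hker : ∑ i ∈ s, w i • p i ∈ LinearMap.ker F := by simpa [map_sum] using hw1
  exact Submodule.disjoint_def.mp hF _ hker hmem

theorem exists_linearMap_ker_eq_span_singleton {K W : Type*} [Field K] [AddCommGroup W] [Module K W]
    [FiniteDimensional K W] {d : ℕ} (hW : Module.finrank K W = d + 1) {u : W} (hu : u ≠ 0) :
    ∃ F : W →ₗ[K] (Fin d → K), LinearMap.ker F = K ∙ u := by
  have hQ : Module.finrank K (W ⧸ K ∙ u) = Module.finrank K (Fin d → K) := by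
    have := Submodule.finrank_quotient_add_finrank (K ∙ u)
    rw [finrank_span_singleton hu, hW] at this
    simp only [Module.finrank_fin_fun]
    omega
  exact ⟨(LinearEquiv.ofFinrankEq _ _ hQ).toLinearMap ∘ₗ (K ∙ u).mkQ, by
    rw [LinearEquiv.ker_comp, Submodule.ker_mkQ]⟩

section Embedding

variable {α : Type*} [DecidableEq α]

theorem affineIndependent_finset_iff {k W : Type*} [Ring k] [AddCommGroup W] [Module k W]
    (ψ : α → W) (s : Finset α) :
    AffineIndependent k (fun v : ↥s => ψ v) ↔
      ∀ w : α → k, ∑ v ∈ s, w v = 0 → ∑ v ∈ s, w v • ψ v = 0 → ∀ v ∈ s, w v = 0 := by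
  constructor
  · intro h w hw0 hw1 v hv
    refine h.eq_zero_of_sum_eq_zero (s := Finset.univ) (w := fun i : ↥s => w i) ?_ ?_ ⟨v, hv⟩
      (Finset.mem_univ _)
    · rwa [Finset.sum_coe_sort s w]
    · rwa [Finset.sum_coe_sort s fun v => w v • ψ v]
  · intro h
    rw [affineIndependent_iff_of_fintype]
    intro w hw0 hw1 i
    let w' : α → k := fun v => if hv : v ∈ s then w ⟨v, hv⟩ else 0
    have hw' : ∀ i : ↥s, w' i = w i := fun i => dif_pos i.2
    rw [Finset.univ.weightedVSub_eq_linear_combination hw0] at hw1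
    rw [← hw' i]
    refine h w' ?_ ?_ i i.2
    · rw [← Finset.sum_coe_sort]; simpa only [hw'] using hw0
    · rw [← Finset.sum_coe_sort s fun v => w' v • ψ v]; simpa only [hw'] using hw1

theorem affineIndependent_insert_of_subset_ker {k W : Type*} [Field k] [AddCommGroup W]
    [Module k W] {ψ : α → W} {e : Finset α} (he : AffineIndependent k (fun v : ↥e => ψ v))
    {f : W →ₗ[k] k} (hf : ψ '' e ⊆ LinearMap.ker f) {c : α} (hc : f (ψ c) ≠ 0) :
    AffineIndependent k (fun v : ↥(insert c e) => ψ v) := by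
  have hce : c ∉ e := fun hce => hc (hf (mem_image_of_mem ψ hce))
  rw [affineIndependent_finset_iff] at he ⊢
  intro w hw0 hw1
  rw [Finset.sum_insert hce] at hw0 hw1
  have hfe : ∀ v ∈ e, f (w v • ψ v) = 0 := fun v hv => by
    rw [map_smul, LinearMap.mem_ker.mp (hf (mem_image_of_mem ψ hv)), smul_zero]
  have hwc : w c = 0 := by
    have := congrArg f hw1
    rw [map_add, map_sum, Finset.sum_eq_zero hfe, add_zero, map_smul, map_zero, smul_eq_mul] at this
    exact (mul_eq_zero.mp this).resolve_right hc
  rw [hwc, zero_add] at hw0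
  rw [hwc, zero_smul, zero_add] at hw1
  intro v hv
  rcases Finset.mem_insert.mp hv with rfl | hv
  exacts [hwc, he w hw0 hw1 v hv]

theorem notMem_affineSpan_of_affineIndependent_insert {k W : Type*} [Ring k] [Nontrivial k]
    [AddCommGroup W] [Module k W] {ψ : α → W} {c : α} {e : Finset α}
    (h : AffineIndependent k (fun v : ↥(insert c e) => ψ v)) (hc : c ∉ e) :
    ψ c ∉ affineSpan k (ψ '' e) := by
  have himg : (fun v : ↥(insert c e) => ψ v) '' {v | ↑v ∈ e} = ψ '' e := by
    ext p
    simp only [mem_image, mem_ofPred_eq, Subtype.exists, Finset.mem_insert, exists_and_left,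
      exists_prop]
    aesop
  have := h.mem_affineSpan_iff ⟨c, Finset.mem_insert_self c e⟩ {v | ↑v ∈ e}
  rwa [himg, mem_ofPred_eq, iff_false_intro hc, iff_false] at this

theorem joinTwo_mono {E F : Finset (Finset α)} (h : E ⊆ F) (a b : α) :
    joinTwo E a b ⊆ joinTwo F a b := by
  unfold joinTwo
  gcongr

variable {n : ℕ} {E : Finset (Finset α)}

theorem mem_joinTwo_cases (hempty : ∅ ∈ E) {a b : α} {s : Finset α} (hs : s ∈ joinTwo E a b) :
    s ∈ E ∨ ∃ e ∈ E, s = insert a e ∨ s = insert b e := by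
  simp only [joinTwo, Finset.mem_union, Finset.mem_image, Finset.mem_insert,
    Finset.mem_singleton] at hs
  rcases hs with ((hs | ⟨e, he, rfl⟩) | ⟨e, he, rfl⟩) | rfl | rfl
  · exact .inl hs
  · exact .inr ⟨e, he, .inl rfl⟩
  · exact .inr ⟨e, he, .inr rfl⟩
  · exact .inr ⟨∅, hempty, .inl rfl⟩
  · exact .inr ⟨∅, hempty, .inr rfl⟩

theorem IsGeomEmbedding.mono {F : Finset (Finset α)} {φ : α → (Fin n → ℝ)}
    (hφ : IsGeomEmbedding F φ) (h : E ⊆ F) : IsGeomEmbedding E φ :=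
  ⟨fun e he => hφ.1 e (h he), fun e he e' he' => hφ.2 e (h he) e' (h he')⟩

theorem IsGeomEmbedding.insert_empty {φ : α → (Fin n → ℝ)} (hφ : IsGeomEmbedding E φ) :
    IsGeomEmbedding (insert ∅ E) φ := by
  refine ⟨fun e he => ?_, fun e he e' he' => ?_⟩
  · rcases Finset.mem_insert.mp he with rfl | he
    exacts [affineIndependent_of_subsingleton ℝ _, hφ.1 e he]
  · rcases Finset.mem_insert.mp he with rfl | he
    · simp
    rcases Finset.mem_insert.mp he' with rfl | he'
    exacts [by simp, hφ.2 e he e' he']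

theorem IsGeomEmbedding.congr {φ ψ : α → (Fin n → ℝ)} (hφ : IsGeomEmbedding E φ)
    (h : ∀ e ∈ E, EqOn φ ψ e) : IsGeomEmbedding E ψ := by
  refine ⟨fun e he => ?_, fun e he e' he' => ?_⟩
  · convert hφ.1 e he using 1
    exact funext fun v => (h e he v.2).symm
  · rw [← (h e he).image_eq, ← (h e' he').image_eq,
      ← ((h e he).mono (Finset.coe_subset.mpr Finset.inter_subset_left)).image_eq]
    exact hφ.2 e he e' he'

theorem IsGeomEmbedding.comp_linearMap {m : ℕ} {φ : α → (Fin m → ℝ)}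
    (hφ : IsGeomEmbedding E φ) {L : (Fin m → ℝ) →ₗ[ℝ] (Fin n → ℝ)} (hL : Function.Injective L) :
    IsGeomEmbedding E (L ∘ φ) :=
  ⟨fun e he => (hφ.1 e he).map' L.toAffineMap hL, fun e he e' he' => by
    simp only [image_comp, ← LinearMap.image_convexHull, ← image_inter hL, hφ.2 e he e' he']⟩

theorem IsGeomEmbedding.apply_ne {φ : α → (Fin n → ℝ)} (hφ : IsGeomEmbedding E φ) {a b : α}
    (ha : {a} ∈ E) (hb : {b} ∈ E) (hab : a ≠ b) : φ a ≠ φ b := by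
  intro h
  have := hφ.2 _ ha _ hb
  simp [Finset.singleton_inter_of_notMem (Finset.notMem_singleton.mpr hab), h] at this

theorem IsGeomEmbedding.apply_ne_of_joinTwo {ψ : α → (Fin n → ℝ)} {a b : α}
    (hψ : IsGeomEmbedding (joinTwo E a b) ψ) (hab : a ≠ b) : ψ a ≠ ψ b :=
  hψ.apply_ne (by simp [joinTwo]) (by simp [joinTwo]) hab

theorem IsGeomEmbedding.joinTwo_of_subset_ker {ψ : α → (Fin n → ℝ)} (hψ : IsGeomEmbedding E ψ)
    (hempty : ∅ ∈ E) {f : (Fin n → ℝ) →ₗ[ℝ] ℝ} (hE : ∀ e ∈ E, ψ '' e ⊆ LinearMap.ker f) {a b : α}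
    (ha : 0 < f (ψ a)) (hb : f (ψ b) < 0) : IsGeomEmbedding (joinTwo E a b) ψ := by
  have hnot : ∀ c, f (ψ c) ≠ 0 → ∀ e ∈ E, c ∉ e :=
    fun c hc e he hce => hc (hE e he (mem_image_of_mem ψ hce))
  have hsymm : ∀ s s' : Finset α,
      convexHull ℝ (ψ '' s) ∩ convexHull ℝ (ψ '' s') = convexHull ℝ (ψ '' ↑(s ∩ s')) →
      convexHull ℝ (ψ '' s') ∩ convexHull ℝ (ψ '' s) = convexHull ℝ (ψ '' ↑(s' ∩ s)) := by
    intro s s' h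
    rwa [inter_comm, Finset.inter_comm]
  have hflat : ∀ c, f (ψ c) ≠ 0 → ∀ e ∈ E, ∀ e' ∈ E,
      convexHull ℝ (ψ '' ↑(insert c e)) ∩ convexHull ℝ (ψ '' e') =
        convexHull ℝ (ψ '' ↑(insert c e ∩ e')) := by
    intro c hc e he e' he'
    rw [Finset.insert_inter_of_notMem (hnot c hc e' he'), Finset.coe_insert, image_insert_eq]
    exact convexHull_insert_inter_of_subset_ker (hE e he) (hE e' he') hc (hψ.2 e he e' he')
  have hsame : ∀ c, f (ψ c) ≠ 0 → ∀ e ∈ E, ∀ e' ∈ E,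
      convexHull ℝ (ψ '' ↑(insert c e)) ∩ convexHull ℝ (ψ '' ↑(insert c e')) =
        convexHull ℝ (ψ '' ↑(insert c e ∩ insert c e')) := by
    intro c hc e he e' he'
    rw [← Finset.insert_inter_distrib]
    simp only [Finset.coe_insert, image_insert_eq]
    exact convexHull_insert_inter_insert_self (hE e he) (hE e' he') hc (hψ.2 e he e' he')
  have hmixed : ∀ e ∈ E, ∀ e' ∈ E,
      convexHull ℝ (ψ '' ↑(insert a e)) ∩ convexHull ℝ (ψ '' ↑(insert b e')) =
        convexHull ℝ (ψ '' ↑(insert a e ∩ insert b e')) := by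
    intro e he e' he'
    have hab : a ≠ b := by rintro rfl; linarith
    rw [Finset.insert_inter_of_notMem (by simpa [hab] using hnot a ha.ne' e' he'),
      Finset.inter_insert_of_notMem (hnot b hb.ne e he)]
    simp only [Finset.coe_insert, image_insert_eq]
    exact convexHull_insert_inter_insert_of_neg (hE e he) (hE e' he') ha hb (hψ.2 e he e' he')
  refine ⟨fun s hs => ?_, fun s hs s' hs' => ?_⟩
  · rcases mem_joinTwo_cases hempty hs with hs | ⟨e, he, rfl | rfl⟩
    · exact hψ.1 s hs
    · exact affineIndependent_insert_of_subset_ker (hψ.1 e he) (hE e he) ha.ne'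
    · exact affineIndependent_insert_of_subset_ker (hψ.1 e he) (hE e he) hb.ne
  · rcases mem_joinTwo_cases hempty hs with hs | ⟨e, he, rfl | rfl⟩ <;>
      rcases mem_joinTwo_cases hempty hs' with hs' | ⟨e', he', rfl | rfl⟩
    · exact hψ.2 s hs s' hs'
    · exact hsymm _ _ (hflat a ha.ne' e' he' s hs)
    · exact hsymm _ _ (hflat b hb.ne e' he' s hs)
    · exact hflat a ha.ne' e he s' hs'
    · exact hsame a ha.ne' e he e' he'
    · exact hmixed e he e' he'
    · exact hflat b hb.ne e he s' hs'
    · exact hsymm _ _ (hmixed e' he' e he)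
    · exact hsame b hb.ne e he e' he'

theorem IsGeomEmbedding.comp_of_joinTwo {m : ℕ} {ψ : α → (Fin n → ℝ)} {a b : α}
    (hψ : IsGeomEmbedding (joinTwo E a b) ψ) (haE : ∀ e ∈ E, a ∉ e) (hbE : ∀ e ∈ E, b ∉ e)
    (hab : a ≠ b) {F : (Fin n → ℝ) →ₗ[ℝ] (Fin m → ℝ)} (hF : LinearMap.ker F = ℝ ∙ (ψ a - ψ b)) :
    IsGeomEmbedding E (F ∘ ψ) := by
  have hE : ∀ e ∈ E, e ∈ joinTwo E a b := fun e he =>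
    Finset.mem_union_left _ (Finset.mem_union_left _ (Finset.mem_union_left _ he))
  have haE' : ∀ e ∈ E, insert a e ∈ joinTwo E a b := fun e he =>
    Finset.mem_union_left _ (Finset.mem_union_left _
      (Finset.mem_union_right _ (Finset.mem_image_of_mem _ he)))
  have hbE' : ∀ e ∈ E, insert b e ∈ joinTwo E a b := fun e he =>
    Finset.mem_union_left _ (Finset.mem_union_right _ (Finset.mem_image_of_mem _ he))
  have hu : ψ a - ψ b ≠ 0 := sub_ne_zero.mpr (hψ.apply_ne_of_joinTwo hab)
  have hshift : ∀ e ∈ E, ∀ e' ∈ E, ∀ x ∈ convexHull ℝ (ψ '' e), ∀ c : ℝ, 0 < c →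
      x + c • (ψ a - ψ b) ∉ convexHull ℝ (ψ '' e') := by
    intro e he e' he' x hx c hc
    refine add_smul_sub_notMem_convexHull ?_
      (notMem_affineSpan_of_affineIndependent_insert (hψ.1 _ (haE' e he)) (haE e he)) hx hc
    rw [← image_insert_eq, ← image_insert_eq, ← Finset.coe_insert, ← Finset.coe_insert,
      hψ.2 _ (haE' e he) _ (hbE' e' he'),
      Finset.insert_inter_of_notMem (by simpa [hab] using haE e' he'),
      Finset.inter_insert_of_notMem (hbE e he)]
    exact (convexHull_mono (image_mono (Finset.coe_subset.mpr Finset.inter_subset_left))).trans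
      (convexHull_subset_affineSpan _)
  refine ⟨fun e he => ?_, fun e he e' he' => ?_⟩
  · refine (hψ.1 e (hE e he)).linearMap_comp F ?_
    rw [hF, disjoint_comm, Submodule.disjoint_span_singleton' hu]
    intro hmem
    rw [show range (fun v : ↥e => ψ v) = ψ '' e by ext; simp] at hmem
    obtain ⟨x, hx, c, hc, hxc⟩ := exists_add_smul_mem_convexHull_of_mem_vectorSpan hmem hu
    exact hshift e he e he x hx c hc hxc
  · simp only [image_comp, ← LinearMap.image_convexHull]
    refine Subset.antisymm ?_ (subset_inter (image_mono (convexHull_mono (image_mono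
      (Finset.coe_subset.mpr Finset.inter_subset_left))))
      (image_mono (convexHull_mono (image_mono (Finset.coe_subset.mpr Finset.inter_subset_right)))))
    rintro _ ⟨⟨x, hx, rfl⟩, y, hy, hxy⟩
    obtain ⟨c, hc⟩ : ∃ c : ℝ, c • (ψ a - ψ b) = x - y := by
      rw [← Submodule.mem_span_singleton, ← hF, LinearMap.mem_ker, map_sub, hxy, sub_self]
    rcases lt_trichotomy c 0 with hc0 | rfl | hc0
    · refine (hshift e he e' he' x hx (-c) (neg_pos.mpr hc0) ?_).elim
      rwa [neg_smul, hc, neg_sub, add_sub_cancel]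
    · rw [zero_smul, eq_comm, sub_eq_zero] at hc
      subst hc
      exact ⟨x, hψ.2 e (hE e he) e' (hE e' he') ▸ ⟨hx, hy⟩, rfl⟩
    · refine (hshift e' he' e he y hy c hc0 ?_).elim
      rwa [hc, add_sub_cancel]

theorem IsGeomEmbedding.exists_joinTwo {φ : α → (Fin n → ℝ)} (hφ : IsGeomEmbedding E φ)
    {a b : α} (haE : ∀ e ∈ E, a ∉ e) (hbE : ∀ e ∈ E, b ∉ e) (hab : a ≠ b) :
    ∃ ψ : α → (Fin (n + 1) → ℝ), IsGeomEmbedding (joinTwo E a b) ψ := by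
  let height : α → ℝ := fun v => if v = a then 1 else if v = b then -1 else 0
  let ψ : α → (Fin (n + 1) → ℝ) := fun v => Fin.cons (height v) (φ v)
  let ι : (Fin n → ℝ) →ₗ[ℝ] (Fin (n + 1) → ℝ) :=
    (Fin.consLinearEquiv ℝ fun _ => ℝ).toLinearMap ∘ₗ LinearMap.inr ℝ ℝ (Fin n → ℝ)
  have hι : Function.Injective ι :=
    (Fin.consLinearEquiv ℝ fun _ => ℝ).injective.comp LinearMap.inr_injective
  have hflat : ∀ e ∈ insert ∅ E, ∀ v ∈ e, height v = 0 := by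
    intro e he v hv
    rcases Finset.mem_insert.mp he with rfl | he
    · exact absurd hv (Finset.notMem_empty v)
    · simp [height, ne_of_mem_of_not_mem hv (haE e he), ne_of_mem_of_not_mem hv (hbE e he)]
  have hψ : IsGeomEmbedding (insert ∅ E) ψ := by
    refine (hφ.insert_empty.comp_linearMap hι).congr fun e he v hv => ?_
    simp only [Function.comp_apply, ψ, hflat e he v hv]
    rfl
  refine ⟨ψ, (hψ.joinTwo_of_subset_ker (Finset.mem_insert_self ∅ E) (f := LinearMap.proj 0) ?_
    (by simp [ψ, height]) (by simp [ψ, height, hab.symm])).mono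
      (joinTwo_mono (Finset.subset_insert ∅ E) a b)⟩
  rintro e he _ ⟨v, hv, rfl⟩
  exact hflat e he v hv

theorem IsGeomEmbedding.exists_of_joinTwo {ψ : α → (Fin (n + 1) → ℝ)} {a b : α}
    (hψ : IsGeomEmbedding (joinTwo E a b) ψ) (haE : ∀ e ∈ E, a ∉ e) (hbE : ∀ e ∈ E, b ∉ e)
    (hab : a ≠ b) : ∃ φ : α → (Fin n → ℝ), IsGeomEmbedding E φ := by
  obtain ⟨F, hF⟩ := exists_linearMap_ker_eq_span_singleton (Module.finrank_fin_fun ℝ)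
    (sub_ne_zero.mpr (hψ.apply_ne_of_joinTwo hab))
  exact ⟨F ∘ ψ, hψ.comp_of_joinTwo haE hbE hab hF⟩

end Embedding

theorem stmt2_general {α : Type*} [DecidableEq α] {d : ℕ} (V : Finset α)
    (E : Finset (Finset α)) (hV : ∀ e ∈ E, e ⊆ V)
    (a b : α) (ha : a ∉ V) (hb : b ∉ V) (hab : a ≠ b) :
    (∃ φ : α → (Fin d → ℝ), IsGeomEmbedding E φ) ↔
      (∃ ψ : α → (Fin (d + 1) → ℝ), IsGeomEmbedding (joinTwo E a b) ψ) := by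
  have haE : ∀ e ∈ E, a ∉ e := fun e he hae => ha (hV e he hae)
  have hbE : ∀ e ∈ E, b ∉ e := fun e he hbe => hb (hV e he hbe)
  exact ⟨fun ⟨_, hφ⟩ => hφ.exists_joinTwo haE hbE hab,
    fun ⟨_, hψ⟩ => hψ.exists_of_joinTwo haE hbE hab⟩

/-- `C` geometrically embeds in ℝ^d if and only if the join complex
`C⁺ = C * {a, b}` geometrically embeds in ℝ^(d+1). -/
theorem stmt2 {α : Type*} [DecidableEq α] {d : ℕ} (V : Finset α)
    (E : Finset (Finset α)) (hC : IsComplex E) (hV : ∀ e ∈ E, e ⊆ V)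
    (a b : α) (ha : a ∉ V) (hb : b ∉ V) (hab : a ≠ b) :
    (∃ φ : α → (Fin d → ℝ), IsGeomEmbedding E φ) ↔
      (∃ ψ : α → (Fin (d + 1) → ℝ), IsGeomEmbedding (joinTwo E a b) ψ) :=
  stmt2_general V E hV a b ha hb hab
end

section
/- Let φ be a geometric embedding of the join complex C⁺ = C * {a, b} in ℝ^{d+1} such that φ(a) − φ(b) is parallel to the (d+1)-st coordinate axis. Then the restriction of the projection (x₁,…,x_{d+1}) ↦ (x₁,…,x_d) to the set ∪_{e∈E} conv(φ(e)) is injective. -/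
open AffineMap Set

theorem AffineSubspace.left_mem_of_lineMap_mem {k V P : Type*} [Field k] [AddCommGroup V]
    [Module k V] [AddTorsor V P] {s : AffineSubspace k P} {z q : P} {t : k} (ht : t ≠ 1)
    (hq : q ∈ s) (h : lineMap z q t ∈ s) : z ∈ s := by
  obtain ⟨ε, hε, rfl⟩ : ∃ ε : k, ε ≠ 0 ∧ t = 1 - ε := ⟨1 - t, sub_ne_zero.mpr ht.symm, by ring⟩
  rw [lineMap_apply_one_sub] at h
  simpa [hε] using lineMap_mem ε⁻¹ hq h

theorem exists_lineMap_eq_lineMap_of_sub_eq_smul {k E : Type*} [Field k] [LinearOrder k]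
    [IsStrictOrderedRing k] [AddCommGroup E] [Module k E] {A B p q w : E} {u v : k}
    (huv : 0 < u * v) (hAB : A - B = u • w) (hpq : p - q = v • w) :
    ∃ t ∈ Ioo (0 : k) 1, lineMap A q t = lineMap B p t := by
  have hsum : u + v ≠ 0 := by
    rcases mul_pos_iff.mp huv with ⟨hu, hv⟩ | ⟨hu, hv⟩ <;> [positivity; linarith]
  refine ⟨u / (u + v), ?_, ?_⟩
  · rcases mul_pos_iff.mp huv with ⟨hu, hv⟩ | ⟨hu, hv⟩
    · exact ⟨by positivity, (div_lt_one (by linarith)).mpr (by linarith)⟩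
    · exact ⟨div_pos_of_neg_of_neg hu (by linarith),
        (div_lt_one_of_neg (by linarith)).mpr (by linarith)⟩
  · have h1 : 1 - u / (u + v) = v / (u + v) := by field_simp; ring
    rw [lineMap_apply_module, lineMap_apply_module, h1, ← sub_eq_zero]
    have hdiff : (v / (u + v)) • A + (u / (u + v)) • q - ((v / (u + v)) • B + (u / (u + v)) • p)
        = (v / (u + v)) • (A - B) - (u / (u + v)) • (p - q) := by
      simp only [smul_sub]; abel
    rw [hdiff, hAB, hpq, smul_smul, smul_smul, ← sub_smul]
    have h2 : v / (u + v) * u - u / (u + v) * v = 0 := by ring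
    rw [h2, zero_smul]

theorem AffineIndependent.notMem_affineSpan_image_of_insert {k V P ι : Type*} [Ring k]
    [Nontrivial k] [AddCommGroup V] [Module k V] [AddTorsor V P] [DecidableEq ι] {φ : ι → P}
    {s : Finset ι} {a : ι}
    (h : AffineIndependent k (fun v : ↥(insert a s) => φ v)) (ha : a ∉ s) :
    φ a ∉ affineSpan k (φ '' s) := by
  have := h.notMem_affineSpan_sdiff ⟨a, Finset.mem_insert_self a s⟩ univ
  convert this using 3
  ext x
  simp only [mem_image, Finset.mem_coe, mem_sdiff, mem_univ, mem_singleton_iff, true_and,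
    Subtype.exists, Finset.mem_insert]
  grind

theorem sub_eq_smul_single_last_of_castSucc_eq {R : Type*} [Ring R] {d : ℕ}
    {x y : Fin (d + 1) → R} (h : ∀ i : Fin d, x i.castSucc = y i.castSucc) :
    x - y = (x (Fin.last d) - y (Fin.last d)) • Pi.single (Fin.last d) 1 := by
  funext i
  induction i using Fin.lastCases with
  | last => simp
  | cast j => simp [h j, (Fin.castSucc_lt_last j).ne]

namespace IsGeomEmbedding

variable {α : Type*} [DecidableEq α] {d : ℕ} {H : Finset (Finset α)} {φ : α → (Fin d → ℝ)}

theorem apply_ne_s3 (hφ : IsGeomEmbedding H φ) {v w : α} (hv : {v} ∈ H) (hw : {w} ∈ H)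
    (hvw : v ≠ w) : φ v ≠ φ w := by
  intro h
  have hcap := hφ.2 _ hv _ hw
  rw [Finset.singleton_inter_of_notMem (Finset.notMem_singleton.mpr hvw)] at hcap
  have hmem :
      φ v ∈ convexHull ℝ (φ '' ({v} : Finset α)) ∩ convexHull ℝ (φ '' ({w} : Finset α)) :=
    ⟨subset_convexHull ℝ _ (mem_image_of_mem φ (by simp)),
      h ▸ subset_convexHull ℝ _ (mem_image_of_mem φ (by simp))⟩
  rw [hcap] at hmem
  simp at hmem

theorem lineMap_ne_lineMap (hφ : IsGeomEmbedding H φ) {a b : α} {e f : Finset α}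
    (hbe : insert b e ∈ H) (haf : insert a f ∈ H) (hab : a ≠ b) (hae : a ∉ e) (haf' : a ∉ f)
    {p q : Fin d → ℝ} (hp : p ∈ convexHull ℝ (φ '' e)) (hq : q ∈ convexHull ℝ (φ '' f))
    {t s : ℝ} (ht : t ∈ Ico 0 1) (hs : s ∈ Icc 0 1) :
    lineMap (φ a) q t ≠ lineMap (φ b) p s := by
  intro hxy
  have hx_af : lineMap (φ a) q t ∈ convexHull ℝ (φ '' (insert a f : Finset α)) :=
    (convex_convexHull ℝ _).lineMap_mem
      (subset_convexHull ℝ _ (mem_image_of_mem φ (by simp)))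
      (convexHull_mono (by gcongr; simp) hq) (Ico_subset_Icc_self ht)
  have hy_be : lineMap (φ b) p s ∈ convexHull ℝ (φ '' (insert b e : Finset α)) :=
    (convex_convexHull ℝ _).lineMap_mem
      (subset_convexHull ℝ _ (mem_image_of_mem φ (by simp)))
      (convexHull_mono (by gcongr; simp) hp) hs
  have hcap : insert a f ∩ insert b e ⊆ f := by
    intro z hz
    simp only [Finset.mem_inter, Finset.mem_insert] at hz
    grind
  have hx_f : lineMap (φ a) q t ∈ convexHull ℝ (φ '' f) := by
    have hx_cap := hφ.2 _ haf _ hbe ▸ mem_inter hx_af (hxy ▸ hy_be)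
    exact convexHull_mono (by gcongr) hx_cap
  exact (hφ.1 _ haf).notMem_affineSpan_image_of_insert haf' <|
    AffineSubspace.left_mem_of_lineMap_mem ht.2.ne (convexHull_subset_affineSpan _ hq)
      (convexHull_subset_affineSpan _ hx_f)

theorem sub_ne_smul_of_sub_eq_smul (hφ : IsGeomEmbedding H φ) {a b : α} {e f : Finset α}
    (hbe : insert b e ∈ H) (haf : insert a f ∈ H) (hab : a ≠ b) (hae : a ∉ e) (haf' : a ∉ f)
    {p q w : Fin d → ℝ} (hp : p ∈ convexHull ℝ (φ '' e)) (hq : q ∈ convexHull ℝ (φ '' f))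
    {u v : ℝ} (huv : 0 < u * v) (hab_w : φ a - φ b = u • w) : p - q ≠ v • w := by
  intro hpq_w
  obtain ⟨t, ht, hcross⟩ := exists_lineMap_eq_lineMap_of_sub_eq_smul huv hab_w hpq_w
  exact hφ.lineMap_ne_lineMap hbe haf hab hae haf' hp hq (Ioo_subset_Ico_self ht)
    (Ioo_subset_Icc_self ht) hcross

end IsGeomEmbedding

theorem stmt3_general {α : Type*} [DecidableEq α] {d : ℕ} (V : Finset α)
    (E : Finset (Finset α)) (hV : ∀ e ∈ E, e ⊆ V)
    (a b : α) (ha : a ∉ V) (hab : a ≠ b)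
    (φ : α → (Fin (d + 1) → ℝ)) (hφ : IsGeomEmbedding (joinTwo E a b) φ)
    (hpar : ∀ i : Fin d, φ a i.castSucc = φ b i.castSucc) :
    Set.InjOn (fun (x : Fin (d + 1) → ℝ) (i : Fin d) => x i.castSucc)
      (⋃ e ∈ E, convexHull ℝ (φ '' (e : Set α))) := by
  have hjoin (e : Finset α) (he : e ∈ E) :
      insert a e ∈ joinTwo E a b ∧ insert b e ∈ joinTwo E a b := by
    simp only [joinTwo, Finset.mem_union, Finset.mem_image]
    exact ⟨.inl (.inl (.inr ⟨e, he, rfl⟩)), .inl (.inr ⟨e, he, rfl⟩)⟩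
  have hφab : φ a ≠ φ b := hφ.apply_ne_s3 (by simp [joinTwo]) (by simp [joinTwo]) hab
  intro p hp q hq hpq
  simp only [mem_iUnion] at hp hq
  obtain ⟨e, he, hp⟩ := hp
  obtain ⟨f, hf, hq⟩ := hq
  have hab_w := sub_eq_smul_single_last_of_castSucc_eq hpar
  have hpq_w := sub_eq_smul_single_last_of_castSucc_eq (congrFun hpq)
  set w : Fin (d + 1) → ℝ := Pi.single (Fin.last d) 1
  set u := φ a (Fin.last d) - φ b (Fin.last d)
  set v := p (Fin.last d) - q (Fin.last d)
  have hu : u ≠ 0 := by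
    rintro hu
    rw [hu, zero_smul, sub_eq_zero] at hab_w
    exact hφab hab_w
  by_contra hne
  have hv : v ≠ 0 := by
    rintro hv
    rw [hv, zero_smul, sub_eq_zero] at hpq_w
    exact hne hpq_w
  have haE {e} (he : e ∈ E) : a ∉ e := fun h => ha (hV e he h)
  rcases (mul_ne_zero hu hv).lt_or_gt with huv | huv
  · refine hφ.sub_ne_smul_of_sub_eq_smul (hjoin f hf).2 (hjoin e he).1 hab (haE hf) (haE he)
      hq hp (v := -v) (by linarith [neg_mul_eq_mul_neg u v]) hab_w ?_
    rw [← neg_sub, hpq_w, neg_smul]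
  · exact hφ.sub_ne_smul_of_sub_eq_smul (hjoin e he).2 (hjoin f hf).1 hab (haE he) (haE hf)
      hp hq huv hab_w hpq_w

/-- If `φ` is a geometric embedding of the join complex `C⁺ = C * {a, b}` in
ℝ^(d+1) such that `φ a - φ b` is parallel to the last coordinate axis (i.e.,
`φ a` and `φ b` agree in the first `d` coordinates), then the projection onto
the first `d` coordinates is injective on `⋃ e ∈ E, conv (φ '' e)`. -/
theorem stmt3 {α : Type*} [DecidableEq α] {d : ℕ} (V : Finset α)
    (E : Finset (Finset α)) (hC : IsComplex E) (hV : ∀ e ∈ E, e ⊆ V)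
    (a b : α) (ha : a ∉ V) (hb : b ∉ V) (hab : a ≠ b)
    (φ : α → (Fin (d + 1) → ℝ)) (hφ : IsGeomEmbedding (joinTwo E a b) φ)
    (hpar : ∀ i : Fin d, φ a i.castSucc = φ b i.castSucc) :
    Set.InjOn (fun (x : Fin (d + 1) → ℝ) (i : Fin d) => x i.castSucc)
      (⋃ e ∈ E, convexHull ℝ (φ '' (e : Set α))) :=
  stmt3_general V E hV a b ha hab φ hφ hpar
end

section
/- Every abstract simplicial k-complex on n vertices admits a geometric embedding in ℝ^{2k+1}. In particular, it suffices to place the vertices at n distinct points on the moment curve t ↦ (t, t², …, t^{2k+1}), since any 2k+2 points on the moment curve are affinely independent, and hence any two faces of dimension at most k intersect exactly in the convex hull of their common vertices. -/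
open Function

section MomentCurve

variable {R : Type*} [Field R]

theorem linearIndependent_pow_of_injective {ι : Type*} [Fintype ι] {t : ι → R}
    (ht : Injective t) {n : ℕ} (hn : Fintype.card ι ≤ n) :
    LinearIndependent R (fun i (j : Fin n) => t i ^ (j : ℕ)) := by
  -- Truncated to its first `card ι` columns, the matrix is a square Vandermonde matrix.
  let e := Fintype.equivFin ι
  refine LinearIndependent.of_comp (LinearMap.funLeft R R (Fin.castLE hn)) ?_
  rw [← linearIndependent_equiv e.symm]
  exact Matrix.linearIndependent_rows_of_det_ne_zero
    (Matrix.det_vandermonde_ne_zero_iff.mpr (ht.comp e.symm.injective))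

def momentCurve (d : ℕ) (t : R) : Fin d → R := fun j => t ^ ((j : ℕ) + 1)

theorem affineIndependent_momentCurve {d : ℕ} {ι : Type*} [Fintype ι] {t : ι → R}
    (ht : Injective t) (hcard : Fintype.card ι ≤ d + 1) :
    AffineIndependent R (momentCurve d ∘ t) := by
  rw [affineIndependent_iff]
  intro s w hw₀ hw₁
  refine linearIndependent_iff'.mp (linearIndependent_pow_of_injective ht hcard) s w ?_
  funext j
  rw [Finset.sum_apply]
  refine Fin.cases ?_ (fun m => ?_) j
  · simpa using hw₀
  · simpa [Finset.sum_apply, momentCurve] using congrFun hw₁ m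

end MomentCurve

theorem convexHull_image_inter_of_affineIndependent {R E α : Type*} [Field R] [LinearOrder R]
    [IsStrictOrderedRing R] [AddCommGroup E] [Module R E] [DecidableEq α]
    {φ : α → E} {s t : Finset α} (h : AffineIndependent R (fun v : ↥(s ∪ t) => φ v)) :
    convexHull R (φ '' s) ∩ convexHull R (φ '' t) = convexHull R (φ '' ↑(s ∩ t)) := by
  classical
  have hinj : Set.InjOn φ ↑(s ∪ t) := Set.injOn_iff_injective.mpr h.injective
  have hrange : Set.range (fun v : ↥(s ∪ t) => φ v) = ↑((s ∪ t).image φ) := by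
    ext; simp
  have himage := (hrange ▸ h.range).convexHull_inter (t₁ := s.image φ) (t₂ := t.image φ)
    (Finset.image_subset_image Finset.subset_union_left)
    (Finset.image_subset_image Finset.subset_union_right)
  rw [Finset.coe_inter, hinj.image_inter (by simp) (by simp)]
  simpa only [Finset.coe_image] using himage.symm

theorem isGeomEmbedding_of_affineIndependent_union {α : Type*} [DecidableEq α] {d : ℕ}
    (E : Finset (Finset α)) (φ : α → (Fin d → ℝ))
    (h : ∀ e ∈ E, ∀ e' ∈ E, AffineIndependent ℝ (fun v : ↥(e ∪ e') => φ v)) :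
    IsGeomEmbedding E φ := by
  refine ⟨fun e he => ?_, fun e he e' he' =>
    convexHull_image_inter_of_affineIndependent (h e he e' he')⟩
  have he := h e he e he
  rwa [Finset.union_self] at he

theorem stmt6_general {α : Type*} [Fintype α] [DecidableEq α] {k : ℕ}
    (E : Finset (Finset α))
    (hdim : ∀ e ∈ E, e.card ≤ k + 1) :
    ∃ φ : α → (Fin (2 * k + 1) → ℝ), IsGeomEmbedding E φ := by
  let t : α → ℝ := fun v => (Fintype.equivFin α v : ℕ)
  have ht : Injective t :=
    Nat.cast_injective.comp (Fin.val_injective.comp (Fintype.equivFin α).injective)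
  refine ⟨momentCurve _ ∘ t, isGeomEmbedding_of_affineIndependent_union E _ fun e he e' he' => ?_⟩
  refine affineIndependent_momentCurve (ht.comp Subtype.val_injective) ?_
  have := Finset.card_union_le e e'
  have := hdim e he
  have := hdim e' he'
  rw [Fintype.card_coe]
  omega

/-- Every abstract simplicial k-complex (every hyperedge has at most k+1
vertices) admits a geometric embedding in ℝ^(2k+1). -/
theorem stmt6 {α : Type*} [Fintype α] [DecidableEq α] {k : ℕ}
    (E : Finset (Finset α)) (hC : IsComplex E)
    (hdim : ∀ e ∈ E, e.card ≤ k + 1) :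
    ∃ φ : α → (Fin (2 * k + 1) → ℝ), IsGeomEmbedding E φ :=
  stmt6_general E hdim
end

section
/- Let T₁, …, T_m be pairwise disjoint compact sets in ℝ³, each homeomorphic to the 2-sphere, and let u ∈ ℝ³ be a point that is connected by a segment (disjoint from every Tᵢ except possibly at endpoints) to at least one point of each Tᵢ. Then u lies in the bounded complementary component ('inside') of at most one of the Tᵢ. -/
/-!
Suppose `u` lies inside both `Tᵢ` and `Tⱼ`, with complementary components `Cᵢ ∋ u` and
`Cⱼ ∋ u` bounded. The segment from `u` to `Tⱼ` avoids `Tᵢ`, so the connected set `Tⱼ` lies in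
`Cᵢ`; likewise `Tᵢ ⊆ Cⱼ`. An unbounded component `O` of the complement of `Tⱼ` is disjoint from
`Cⱼ`, hence from `Tᵢ`, and its closure only adds points of `Tⱼ ⊆ Cᵢ`. So `closure O` is a
connected set avoiding `Tᵢ` and meeting `Cᵢ`, whence `O ⊆ Cᵢ` is bounded: a contradiction.
-/

open Set Metric Bornology

def insideOf (T : Set (EuclideanSpace ℝ (Fin 3))) : Set (EuclideanSpace ℝ (Fin 3)) :=
  {p | p ∉ T ∧ Bornology.IsBounded (connectedComponentIn Tᶜ p)}

section Topology

variable {X Y : Type*} [TopologicalSpace X] [TopologicalSpace Y]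

theorem IsPreconnected.of_homeomorph {s : Set X} {t : Set Y} (ht : IsPreconnected t)
    (e : s ≃ₜ t) : IsPreconnected s := by
  have : PreconnectedSpace t := isPreconnected_iff_preconnectedSpace.mp ht
  simpa [e.symm.surjective.range_comp] using
    isPreconnected_range (continuous_subtype_val.comp e.symm.continuous)

theorem closure_connectedComponentIn_subset (F : Set X) (x : X) :
    closure (connectedComponentIn F x) ⊆ connectedComponentIn F x ∪ Fᶜ := by
  intro p hp
  by_cases hpF : p ∈ F
  · obtain ⟨y, hy⟩ := closure_nonempty_iff.mp ⟨p, hp⟩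
    rw [connectedComponentIn_eq hy] at hp ⊢
    have hinsert : IsPreconnected (insert p (connectedComponentIn F y)) :=
      isPreconnected_connectedComponentIn.subset_closure (subset_insert _ _)
        (insert_subset hp subset_closure)
    exact .inl <| hinsert.subset_connectedComponentIn
      (mem_insert_of_mem _ (mem_connectedComponentIn (connectedComponentIn_subset _ _ hy)))
      (insert_subset hpF (connectedComponentIn_subset _ _)) (mem_insert p _)
  · exact .inr hpF

theorem frontier_connectedComponentIn_subset [LocallyConnectedSpace X] {F : Set X}
    (hF : IsOpen F) (x : X) : frontier (connectedComponentIn F x) ⊆ Fᶜ := fun _ hp =>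
  (closure_connectedComponentIn_subset F x hp.1).resolve_left
    (hF.connectedComponentIn.interior_eq ▸ hp.2)

theorem disjoint_connectedComponentIn_of_ne {F : Set X} {x y : X}
    (hxy : connectedComponentIn F x ≠ connectedComponentIn F y) :
    Disjoint (connectedComponentIn F x) (connectedComponentIn F y) :=
  disjoint_left.mpr fun _ hx hy => hxy ((connectedComponentIn_eq hx).trans
    (connectedComponentIn_eq hy).symm)

end Topology

theorem subset_connectedComponentIn_of_segment_subset {V : Type*} [AddCommGroup V] [Module ℝ V]
    [TopologicalSpace V] [IsTopologicalAddGroup V] [ContinuousSMul ℝ V] {A B : Set V} {u x : V}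
    (hB : IsPreconnected B) (hx : x ∈ B) (hBA : B ⊆ Aᶜ) (hux : segment ℝ u x ⊆ Aᶜ) :
    B ⊆ connectedComponentIn Aᶜ u := by
  have hxu : x ∈ connectedComponentIn Aᶜ u :=
    (convex_segment u x).isPreconnected.subset_connectedComponentIn (left_mem_segment ℝ u x)
      hux (right_mem_segment ℝ u x)
  rw [connectedComponentIn_eq hxu]
  exact hB.subset_connectedComponentIn hx hBA

section NormedSpace

variable {E : Type*} [NormedAddCommGroup E] [NormedSpace ℝ E] (h : 1 < Module.rank ℝ E)
include h

theorem isPreconnected_compl_closedBall {R : ℝ} (hR : 0 ≤ R) :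
    IsPreconnected (closedBall (0 : E) R)ᶜ := by
  have hpolar : (fun q : E × ℝ => q.2 • q.1) '' (sphere 0 1 ×ˢ Ioi R) = (closedBall 0 R)ᶜ := by
    ext y
    simp only [mem_image, mem_prod, mem_sphere_zero_iff_norm, mem_Ioi, mem_compl_iff,
      mem_closedBall_zero_iff, not_le, Prod.exists]
    constructor
    · rintro ⟨v, t, ⟨hv, ht⟩, rfl⟩
      rwa [norm_smul, hv, mul_one, Real.norm_of_nonneg (hR.trans ht.le)]
    · intro hy
      have hy0 : ‖y‖ ≠ 0 := (hR.trans_lt hy).ne'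
      exact ⟨‖y‖⁻¹ • y, ‖y‖, ⟨by rw [norm_smul, norm_inv, norm_norm, inv_mul_cancel₀ hy0], hy⟩,
        smul_inv_smul₀ hy0 y⟩
  rw [← hpolar]
  exact ((isPreconnected_sphere h 0 1).prod isPreconnected_Ioi).image _
    (continuous_snd.smul continuous_fst).continuousOn

theorem exists_not_isBounded_connectedComponentIn_compl {K : Set E} (hK : IsBounded K) :
    ∃ w, ¬IsBounded (connectedComponentIn Kᶜ w) := by
  have : Nontrivial E := rank_pos_iff_nontrivial.mp (zero_lt_one.trans h)
  obtain ⟨R, hR, hKR⟩ := hK.subset_closedBall_lt 0 0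
  have hunb : ¬IsBounded (closedBall (0 : E) R)ᶜ := fun hb =>
    NormedSpace.unbounded_univ ℝ E (union_compl_self (closedBall (0 : E) R) ▸
      isBounded_closedBall.union hb)
  obtain ⟨w, hw⟩ := nonempty_of_not_isBounded hunb
  exact ⟨w, fun hb => hunb <| hb.subset <| (isPreconnected_compl_closedBall h hR.le)
    |>.subset_connectedComponentIn hw (compl_subset_compl.mpr hKR)⟩

theorem not_isBounded_connectedComponentIn_compl_of_subset {A B : Set E} {u : E}
    (hB : IsClosed B) (hBne : B.Nonempty) (hAB : A ⊆ connectedComponentIn Bᶜ u)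
    (hBA : B ⊆ connectedComponentIn Aᶜ u) (hA : IsBounded (connectedComponentIn Aᶜ u)) :
    ¬IsBounded (connectedComponentIn Bᶜ u) := by
  intro hBu
  obtain ⟨w, hw⟩ := exists_not_isBounded_connectedComponentIn_compl h (hA.subset hBA)
  have hwu : connectedComponentIn Bᶜ w ≠ connectedComponentIn Bᶜ u := fun hwu => hw (hwu ▸ hBu)
  set O := connectedComponentIn Bᶜ w
  have hOA : Disjoint O A := (disjoint_connectedComponentIn_of_ne hwu).mono_right hAB
  obtain ⟨p, hp⟩ : (frontier O).Nonempty := by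
    refine nonempty_frontier_iff.mpr ⟨nonempty_of_not_isBounded hw, fun hO => ?_⟩
    obtain ⟨b, hb⟩ := hBne
    have hbO : b ∈ O := hO ▸ mem_univ b
    exact connectedComponentIn_subset _ _ hbO hb
  have hpB : p ∈ B := by simpa using frontier_connectedComponentIn_subset hB.isOpen_compl w hp
  have hclA : closure O ⊆ Aᶜ := fun y hy =>
    (closure_connectedComponentIn_subset _ _ hy).elim (fun hyO => disjoint_left.mp hOA hyO)
      fun hyB => connectedComponentIn_subset _ _ (hBA (by simpa using hyB))
  have hclu : closure O ⊆ connectedComponentIn Aᶜ u := by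
    rw [connectedComponentIn_eq (hBA hpB)]
    exact isPreconnected_connectedComponentIn.closure.subset_connectedComponentIn
      (frontier_subset_closure hp) hclA
  exact hw (hA.subset (subset_closure.trans hclu))

end NormedSpace

/-- Let `T₁, …, T_m` be pairwise disjoint compact subsets of ℝ³, each
homeomorphic to the 2-sphere, and let `u` be a point connected by a segment
(whose interior avoids all the `Tⱼ`) to a point of each `Tᵢ`. Then `u` lies in
the bounded complementary component of at most one of the `Tᵢ`. -/
theorem stmt11 {m : ℕ} (T : Fin m → Set (EuclideanSpace ℝ (Fin 3)))
    (hdisj : Pairwise (Function.onFun Disjoint T))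
    (hcpt : ∀ i, IsCompact (T i))
    (hsph : ∀ i, Nonempty
      (↥(T i) ≃ₜ ↥(Metric.sphere (0 : EuclideanSpace ℝ (Fin 3)) 1)))
    (u : EuclideanSpace ℝ (Fin 3))
    (hseg : ∀ i, ∃ x ∈ T i, ∀ y ∈ openSegment ℝ u x, ∀ j, y ∉ T j) :
    ∀ i j, u ∈ insideOf (T i) → u ∈ insideOf (T j) → i = j := by
  have hrank : 1 < Module.rank ℝ (EuclideanSpace ℝ (Fin 3)) :=
    Module.one_lt_rank_of_one_lt_finrank (by simp)
  have hconn : ∀ k, IsPreconnected (T k) := fun k =>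
    (hsph k).elim (isPreconnected_sphere hrank 0 1).of_homeomorph
  have hencl : ∀ k l, k ≠ l → u ∉ T k → T l ⊆ connectedComponentIn (T k)ᶜ u := by
    intro k l hkl hu
    obtain ⟨x, hx, hxseg⟩ := hseg l
    have hlk : T l ⊆ (T k)ᶜ := disjoint_left.mp (hdisj hkl.symm)
    refine subset_connectedComponentIn_of_segment_subset (hconn l) hx hlk ?_
    rw [← insert_endpoints_openSegment]
    rintro y (rfl | rfl | hy)
    exacts [hu, hlk hx, hxseg y hy k]
  intro i j hi hj
  by_contra hij
  obtain ⟨x, hx, -⟩ := hseg j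
  exact not_isBounded_connectedComponentIn_compl_of_subset hrank (hcpt j).isClosed ⟨x, hx⟩
    (hencl j i (Ne.symm hij) hj.1) (hencl i j hij hi.1) hi.2 hj.2
end

section
/- Let T, T' ⊆ ℝ³ be disjoint compact sets each homeomorphic to the 2-sphere, and suppose a point u lies in the bounded complementary component of both T and T'. If T' is contained in the bounded complementary component of T, then every continuous path from u to any point of T intersects T'. -/
/-- If `T, T'` are disjoint compact subsets of ℝ³ each homeomorphic to the
2-sphere, `u` lies inside both, and `T' ⊆ inside(T)`, then the inner sphere
`T'` separates `u` from the outer sphere `T`: every continuous path from `u`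
to any point of `T` meets `T'`. -/
theorem stmt12 (T T' : Set (EuclideanSpace ℝ (Fin 3)))
    (hcpt : IsCompact T) (hcpt' : IsCompact T') (hdisj : Disjoint T T')
    (hsph : Nonempty (↥T ≃ₜ ↥(Metric.sphere (0 : EuclideanSpace ℝ (Fin 3)) 1)))
    (hsph' : Nonempty (↥T' ≃ₜ ↥(Metric.sphere (0 : EuclideanSpace ℝ (Fin 3)) 1)))
    (u : EuclideanSpace ℝ (Fin 3))
    (hu : u ∈ insideOf T) (hu' : u ∈ insideOf T') (hTT' : T' ⊆ insideOf T) :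
    ∀ x ∈ T, ∀ γ : Path u x, ∃ s : unitInterval, γ s ∈ T' := by
  classical
  intro x hx γ
  by_contra hcon
  push_neg at hcon
  -- the path lies in `T'ᶜ`
  have hγsub : Set.range γ ⊆ T'ᶜ := by
    rintro _ ⟨s, rfl⟩; exact hcon s
  have huγ : u ∈ Set.range γ := ⟨0, γ.source⟩
  have hxγ : x ∈ Set.range γ := ⟨1, γ.target⟩
  set C' := connectedComponentIn T'ᶜ u with hC'def
  have hγconn : IsPreconnected (Set.range (γ : unitInterval → EuclideanSpace ℝ (Fin 3))) :=
    isPreconnected_range γ.continuous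
  have hxC' : x ∈ C' := hγconn.subset_connectedComponentIn huγ hγsub hxγ
  have hC'bdd : Bornology.IsBounded C' := hu'.2
  -- `T` is connected
  have hrank : 1 < Module.rank ℝ (EuclideanSpace ℝ (Fin 3)) := by
    rw [← Module.finrank_eq_rank, finrank_euclideanSpace_fin]; norm_num
  have hTconn : IsPreconnected T := by
    obtain ⟨e⟩ := hsph
    have hs : IsPreconnected (Metric.sphere (0 : EuclideanSpace ℝ (Fin 3)) 1) :=
      (isConnected_sphere hrank 0 zero_le_one).isPreconnected
    have : T = Set.range (fun y : ↥(Metric.sphere (0 : EuclideanSpace ℝ (Fin 3)) 1) => (e.symm y : EuclideanSpace ℝ (Fin 3))) := by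
      ext p
      constructor
      · intro hp; exact ⟨e ⟨p, hp⟩, by simp⟩
      · rintro ⟨y, rfl⟩; exact (e.symm y).2
    rw [this, ← Set.image_univ]
    have : PreconnectedSpace ↥(Metric.sphere (0 : EuclideanSpace ℝ (Fin 3)) 1) :=
      Subtype.preconnectedSpace hs
    exact isPreconnected_univ.image _
      (continuous_subtype_val.comp e.symm.continuous).continuousOn
  have hTsub : T ⊆ T'ᶜ := fun p hp hp' => (hdisj.ne_of_mem hp hp') rfl
  -- `T ⊆ C'`
  have hTC' : T ⊆ C' := by
    have h1 : T ⊆ connectedComponentIn T'ᶜ x :=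
      hTconn.subset_connectedComponentIn hx hTsub
    rwa [← connectedComponentIn_eq hxC'] at h1
  -- pick a far-away point `z`
  obtain ⟨R₀, hTball₀⟩ := hcpt.isBounded.subset_closedBall 0
  set R : ℝ := max R₀ 1 with hRdef
  have hR1 : 1 ≤ R := le_max_right _ _
  have hR0 : 0 < R := lt_of_lt_of_le one_pos hR1
  have hTball : T ⊆ Metric.closedBall 0 R :=
    hTball₀.trans (Metric.closedBall_subset_closedBall (le_max_left _ _))
  set z : EuclideanSpace ℝ (Fin 3) := EuclideanSpace.single (0 : Fin 3) (R + 1) with hzdef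
  have hznorm : ‖z‖ = R + 1 := by
    rw [hzdef, EuclideanSpace.norm_single, Real.norm_eq_abs, abs_of_pos (by linarith)]
  have hzT : z ∈ Tᶜ := by
    intro hz
    have := hTball hz
    rw [Metric.mem_closedBall, dist_zero_right, hznorm] at this
    linarith
  set W := connectedComponentIn Tᶜ z with hWdef
  -- the ray through `z` lies in `W`
  have hray : ∀ t : ℝ, 1 ≤ t → t • z ∈ W := by
    have hconn : IsPreconnected ((fun t : ℝ => t • z) '' Set.Ici 1) :=
      isPreconnected_Ici.image _ (continuous_id.smul continuous_const).continuousOn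
    have hsub : ((fun t : ℝ => t • z) '' Set.Ici 1) ⊆ Tᶜ := by
      rintro _ ⟨t, ht, rfl⟩
      rw [Set.mem_Ici] at ht
      intro hmem
      have h1 := hTball hmem
      rw [Metric.mem_closedBall, dist_zero_right, norm_smul, Real.norm_eq_abs,
        abs_of_pos (by linarith : (0:ℝ) < t), hznorm] at h1
      nlinarith
    have hmemz : z ∈ ((fun t : ℝ => t • z) '' Set.Ici 1) :=
      ⟨1, Set.mem_Ici.mpr le_rfl, one_smul ℝ z⟩
    intro t ht
    exact hconn.subset_connectedComponentIn hmemz hsub ⟨t, Set.mem_Ici.mpr ht, rfl⟩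
  have hWunbdd : ¬ Bornology.IsBounded W := by
    intro hb
    obtain ⟨r, hr⟩ := hb.subset_closedBall 0
    have ht : (1 : ℝ) ≤ max 1 (r + 1) := le_max_left _ _
    have h1 := hr (hray _ ht)
    rw [Metric.mem_closedBall, dist_zero_right, norm_smul, Real.norm_eq_abs,
      abs_of_pos (by linarith : (0:ℝ) < max 1 (r + 1)), hznorm] at h1
    have h2 : r + 1 ≤ max 1 (r + 1) := le_max_right _ _
    nlinarith
  -- `W` avoids `T'`
  have hWT' : W ⊆ T'ᶜ := by
    intro p hp hp'
    have h1 : connectedComponentIn Tᶜ z = connectedComponentIn Tᶜ p :=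
      connectedComponentIn_eq hp
    exact hWunbdd (by rw [hWdef, h1]; exact (hTT' hp').2)
  have hTopen : IsOpen (Tᶜ) := hcpt.isClosed.isOpen_compl
  have hT'open : IsOpen (T'ᶜ) := hcpt'.isClosed.isOpen_compl
  have hWopen : IsOpen W := hTopen.connectedComponentIn
  have hWne : W.Nonempty := ⟨z, mem_connectedComponentIn hzT⟩
  have hWsubTc : W ⊆ Tᶜ := connectedComponentIn_subset _ _
  have hWuniv : W ≠ Set.univ := by
    intro h
    exact (hWsubTc (h ▸ Set.mem_univ x)) hx
  -- the frontier of `W` is nonempty and contained in `T`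
  have hfr : (frontier W).Nonempty := by
    by_contra h
    rw [Set.not_nonempty_iff_eq_empty] at h
    have hclopen : IsClopen W := isClopen_iff_frontier_eq_empty.mpr h
    rcases isClopen_iff.mp hclopen with h1 | h1
    · exact hWne.ne_empty h1
    · exact hWuniv h1
  obtain ⟨q, hq⟩ := hfr
  rw [hWopen.frontier_eq] at hq
  obtain ⟨hqcl, hqW⟩ := hq
  have hqT : q ∈ T := by
    by_contra hqT
    have hqTc : q ∈ Tᶜ := hqT
    have hopen : IsOpen (connectedComponentIn Tᶜ q) := hTopen.connectedComponentIn
    obtain ⟨p, hp1, hp2⟩ := mem_closure_iff.mp hqcl _ hopen (mem_connectedComponentIn hqTc)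
    have e1 : connectedComponentIn Tᶜ q = connectedComponentIn Tᶜ p :=
      connectedComponentIn_eq hp1
    have e2 : connectedComponentIn Tᶜ z = connectedComponentIn Tᶜ p :=
      connectedComponentIn_eq hp2
    exact hqW (by rw [hWdef, e2, ← e1]; exact mem_connectedComponentIn hqTc)
  -- conclude: `W` meets the open set `C'`, hence `W ⊆ C'`, contradicting unboundedness
  have hqC' : q ∈ C' := hTC' hqT
  have hC'open : IsOpen C' := hT'open.connectedComponentIn
  obtain ⟨p, hpC', hpW⟩ := mem_closure_iff.mp hqcl _ hC'open hqC'
  have hWsubC' : W ⊆ C' := by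
    have h1 : W ⊆ connectedComponentIn T'ᶜ p :=
      isPreconnected_connectedComponentIn.subset_connectedComponentIn hpW hWT'
    rwa [← connectedComponentIn_eq hpC'] at h1
  exact hWunbdd (hC'bdd.subset hWsubC')
end

section
/- Let u ∈ ℝ³, let e be a closed segment with endpoints s, t not collinear with u, and let W be the 2-dimensional wedge {u + λ(x − u) : x ∈ e, λ ≥ 0}. For p ∈ W \ (e ∪ {u}), say p > e if the segment u p does not meet e, and p < e if it does. If p, q ∈ W \ e satisfy p > e and q < e, and neither p nor q lies on the rays u s or u t, then the segment p q intersects the open segment e \ {s, t}. -/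
/-!
Write points of the wedge in cone coordinates `u + a • (s - u) + b • (t - u)` with `a, b ≥ 0`;
the edge is the part of the wedge where `a + b = 1`. The segment `u p` contains the point of
coordinate sum `1` on its ray as soon as `a + b ≥ 1`, so `p` above the edge means `a + b < 1`.
If `q` is below the edge, linear independence of `s - u, t - u` forces its coordinate sum to
exceed `1`. Along the segment `p q` the coordinate sum is affine, so it equals `1` somewhere; both
coordinates stay positive there because those of `p` are, giving a point of the open edge.
-/

theorem openSegment_subset_segment_diff_pair {𝕜 E : Type*} [Ring 𝕜] [LinearOrder 𝕜]
    [IsStrictOrderedRing 𝕜] [DenselyOrdered 𝕜] [AddCommGroup E] [Module 𝕜 E]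
    [Module.IsTorsionFree 𝕜 E]
    {x y : E} (hxy : x ≠ y) : openSegment 𝕜 x y ⊆ segment 𝕜 x y \ {x, y} := by
  intro z hz
  refine ⟨openSegment_subset_segment 𝕜 x y hz, ?_⟩
  rintro (rfl | rfl)
  · exact hxy (left_mem_openSegment_iff.mp hz)
  · exact hxy (right_mem_openSegment_iff.mp hz)

section Wedge

variable {V : Type*} [AddCommGroup V] [Module ℝ V] {u s t p q : V}

def wedge (u s t : V) : Set V :=
  {y | ∃ x ∈ segment ℝ s t, ∃ l : ℝ, 0 ≤ l ∧ y = u + l • (x - u)}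

theorem linearIndependent_sub_of_not_collinear (h : ¬ Collinear ℝ ({u, s, t} : Set V)) :
    LinearIndependent ℝ ![s - u, t - u] := by
  have hind := affineIndependent_iff_not_collinear_set.mpr h
  rw [affineIndependent_iff_linearIndependent_vsub ℝ _ 0] at hind
  convert hind.comp (fun i : Fin 2 => ⟨i.succ, Fin.succ_ne_zero i⟩)
    (fun i j hij => Fin.succ_injective _ (congrArg Subtype.val hij)) using 1
  · ext i
    fin_cases i <;> rfl
  · rfl

theorem exists_coords_of_mem_wedge {y : V} (hy : y ∈ wedge u s t) :
    ∃ a b : ℝ, 0 ≤ a ∧ 0 ≤ b ∧ y = u + a • (s - u) + b • (t - u) := by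
  obtain ⟨x, ⟨a, b, ha, hb, hab, rfl⟩, l, hl, rfl⟩ := hy
  refine ⟨l * a, l * b, mul_nonneg hl ha, mul_nonneg hl hb, ?_⟩
  obtain rfl : b = 1 - a := by linarith
  module

theorem coords_sum_lt_one_of_segment_inter_eq_empty {a b : ℝ} (ha : 0 ≤ a) (hb : 0 ≤ b)
    (hab : 0 < a + b) (hp : p = u + a • (s - u) + b • (t - u))
    (habove : segment ℝ u p ∩ segment ℝ s t = ∅) : a + b < 1 := by
  by_contra! h
  set m := (a + b)⁻¹
  have hm : m * (a + b) = 1 := inv_mul_cancel₀ hab.ne'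
  have hm0 : 0 < m := inv_pos.mpr hab
  have hm1 : m ≤ 1 := inv_le_one_of_one_le₀ h
  -- the point of coordinate sum `1` on the ray through `p`
  have hz : (m * a) • s + (m * b) • t ∈ segment ℝ u p ∩ segment ℝ s t := by
    refine ⟨⟨1 - m, m, by linarith, hm0.le, by ring, ?_⟩,
      ⟨m * a, m * b, by positivity, by positivity, by linear_combination hm, rfl⟩⟩
    rw [hp]
    match_scalars
    · linear_combination -hm
    · ring
    · ring
  simp [habove] at hz

theorem one_lt_coords_sum_of_segment_inter_nonempty (hind : LinearIndependent ℝ ![s - u, t - u])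
    {c d : ℝ} (hq : q = u + c • (s - u) + d • (t - u))
    (hbelow : (segment ℝ u q ∩ segment ℝ s t).Nonempty) (hqe : q ∉ segment ℝ s t) :
    1 < c + d := by
  obtain ⟨z, ⟨m', m, hm', hm, hmm, rfl⟩, ⟨a, b, ha, hb, hab, hz⟩⟩ := hbelow
  obtain rfl : m' = 1 - m := by linarith
  obtain rfl : b = 1 - a := by linarith
  have hcoords : (m * c - a) • (s - u) + (m * d - (1 - a)) • (t - u) = 0 := by
    linear_combination (norm := module) -hz - m • hq
  obtain ⟨hac, hbd⟩ := LinearIndependent.pair_iff.mp hind _ _ hcoords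
  have hsum : m * (c + d) = 1 := by linarith
  have hle : 1 ≤ c + d := by
    by_contra! h
    nlinarith [mul_nonneg hm (sub_nonneg.mpr h.le)]
  refine hle.lt_of_ne fun h => hqe ?_
  obtain rfl : m = 1 := by simpa [← h] using hsum
  exact ⟨a, 1 - a, ha, hb, hab, by simpa using hz⟩

theorem segment_inter_openSegment_nonempty_of_coords {a b c d : ℝ} (ha : 0 < a) (hb : 0 < b)
    (hc : 0 ≤ c) (hd : 0 ≤ d) (hab : a + b < 1) (hcd : 1 < c + d)
    (hp : p = u + a • (s - u) + b • (t - u)) (hq : q = u + c • (s - u) + d • (t - u)) :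
    (segment ℝ p q ∩ openSegment ℝ s t).Nonempty := by
  set l := (1 - (a + b)) / ((c + d) - (a + b))
  have hD : 0 < (c + d) - (a + b) := by linarith
  have hl0 : 0 < l := div_pos (by linarith) hD
  have hl1 : l < 1 := (div_lt_one hD).mpr (by linarith)
  have hlD : l * ((c + d) - (a + b)) = 1 - (a + b) := div_mul_cancel₀ _ hD.ne'
  refine ⟨((1 - l) * a + l * c) • s + ((1 - l) * b + l * d) • t,
    ⟨1 - l, l, by linarith, hl0.le, by ring, ?_⟩,
    ⟨_, _, by positivity, by positivity, by linear_combination hlD, rfl⟩⟩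
  rw [hp, hq]
  match_scalars
  · linear_combination -hlD
  · ring
  · ring

end Wedge

theorem stmt15_general (u s t p q : Fin 3 → ℝ) (hcol : ¬ Collinear ℝ ({u, s, t} : Set (Fin 3 → ℝ)))
    (hpW : p ∈ {y | ∃ x ∈ segment ℝ s t, ∃ l : ℝ, 0 ≤ l ∧ y = u + l • (x - u)} \
      (segment ℝ s t ∪ {u}))
    (hqW : q ∈ {y | ∃ x ∈ segment ℝ s t, ∃ l : ℝ, 0 ≤ l ∧ y = u + l • (x - u)} \
      segment ℝ s t)
    (habove : segment ℝ u p ∩ segment ℝ s t = ∅)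
    (hbelow : (segment ℝ u q ∩ segment ℝ s t).Nonempty)
    (hps : ¬ ∃ l : ℝ, 0 ≤ l ∧ p = u + l • (s - u))
    (hpt : ¬ ∃ l : ℝ, 0 ≤ l ∧ p = u + l • (t - u)) :
    (segment ℝ p q ∩ (segment ℝ s t \ {s, t})).Nonempty := by
  have hind := linearIndependent_sub_of_not_collinear hcol
  have hst : s ≠ t := fun h => by simpa [h] using hind.injective.ne (show (0 : Fin 2) ≠ 1 by simp)
  obtain ⟨a, b, ha, hb, hp⟩ := exists_coords_of_mem_wedge hpW.1
  obtain ⟨c, d, hc, hd, hq⟩ := exists_coords_of_mem_wedge hqW.1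
  have ha' : 0 < a := ha.lt_of_ne fun h => hpt ⟨b, hb, by rw [hp, ← h]; module⟩
  have hb' : 0 < b := hb.lt_of_ne fun h => hps ⟨a, ha, by rw [hp, ← h]; module⟩
  have hab := coords_sum_lt_one_of_segment_inter_eq_empty ha hb (by linarith) hp habove
  have hcd := one_lt_coords_sum_of_segment_inter_nonempty hind hq hbelow hqW.2
  obtain ⟨x, hxpq, hxe⟩ := segment_inter_openSegment_nonempty_of_coords ha' hb' hc hd hab hcd hp hq
  exact ⟨x, hxpq, openSegment_subset_segment_diff_pair hst hxe⟩

/-- Above/below consistency in a wedge: let `u ∈ ℝ³`, let `e` be the segment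
with endpoints `s, t` not collinear with `u`, and let `W` be the wedge of all
rays from `u` through points of `e`. If `p, q ∈ W \ e` with `p` above `e`
(segment `u p` misses `e`) and `q` below `e` (segment `u q` meets `e`), and
neither `p` nor `q` lies on the rays `u s` or `u t`, then the segment `p q`
meets the open edge `e \ {s, t}`. -/
theorem stmt15 (u s t p q : Fin 3 → ℝ) (hcol : ¬ Collinear ℝ ({u, s, t} : Set (Fin 3 → ℝ)))
    (hpW : p ∈ {y | ∃ x ∈ segment ℝ s t, ∃ l : ℝ, 0 ≤ l ∧ y = u + l • (x - u)} \
      (segment ℝ s t ∪ {u}))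
    (hqW : q ∈ {y | ∃ x ∈ segment ℝ s t, ∃ l : ℝ, 0 ≤ l ∧ y = u + l • (x - u)} \
      segment ℝ s t)
    (habove : segment ℝ u p ∩ segment ℝ s t = ∅)
    (hbelow : (segment ℝ u q ∩ segment ℝ s t).Nonempty)
    (hps : ¬ ∃ l : ℝ, 0 ≤ l ∧ p = u + l • (s - u))
    (hpt : ¬ ∃ l : ℝ, 0 ≤ l ∧ p = u + l • (t - u))
    (hqs : ¬ ∃ l : ℝ, 0 ≤ l ∧ q = u + l • (s - u))
    (hqt : ¬ ∃ l : ℝ, 0 ≤ l ∧ q = u + l • (t - u)) :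
    (segment ℝ p q ∩ (segment ℝ s t \ {s, t})).Nonempty :=
  stmt15_general u s t p q hcol hpW hqW habove hbelow hps hpt
end
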